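/- Let X and Y be metric spaces where Y has the coarse Stone property. If there exists a coarse embedding f : X → Y, then X has the coarse Stone property. -/

import Mathlib

open ENNReal NNReal Set Filter ZeroAtInfty

/-- `U` is a cover of the space. -/
def IsCover {X : Type*} (U : Set (Set X)) : Prop := ⋃₀ U = Set.univ

/-- `U` is point-finite: every point lies in only finitely many members. -/
def PointFinite {X : Type*} (U : Set (Set X)) : Prop :=
  ∀ x : X, {V | V ∈ U ∧ x ∈ V}.Finite

/-- The Lebesgue number of a family of sets. -/
noncomputable def Leb {X : Type*} [PseudoMetricSpace X] (U : Set (Set X)) : ℝ≥0∞ :=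
  sSup {d : ℝ≥0∞ | ∀ E : Set X, EMetric.diam E < d → ∃ V ∈ U, E ⊆ V}

/-- The diameter of a family of sets: the sup of the diameters of its members. -/
noncomputable def covDiam {X : Type*} [PseudoMetricSpace X] (U : Set (Set X)) : ℝ≥0∞ :=
  ⨆ V ∈ U, EMetric.diam V

/-- The modulus `Δ_X^{(c)}`. -/
noncomputable def Δc (X : Type*) [PseudoMetricSpace X] (R : ℝ≥0∞) : ℝ≥0∞ :=
  ⨅ U ∈ {U : Set (Set X) | IsCover U ∧ PointFinite U ∧ R ≤ Leb U}, covDiam U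

/-- The modulus `Δ_X^{(u)}`. -/
noncomputable def Δu (X : Type*) [PseudoMetricSpace X] (r : ℝ≥0∞) : ℝ≥0∞ :=
  ⨆ U ∈ {U : Set (Set X) | IsCover U ∧ PointFinite U ∧ covDiam U ≤ r}, Leb U

/-- The density character: the least cardinality of a dense subset. -/
noncomputable def densChar (X : Type*) [TopologicalSpace X] : Cardinal :=
  sInf {c : Cardinal | ∃ s : Set X, Dense s ∧ Cardinal.mk s = c}

/-- The modulus of continuity (expansion) of a map. -/
noncomputable def omegaMod {X Y : Type*} [PseudoMetricSpace X] [PseudoMetricSpace Y]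
    (f : X → Y) (t : ℝ) : ℝ≥0∞ :=
  ⨆ p ∈ {p : X × X | dist p.1 p.2 ≤ t}, edist (f p.1) (f p.2)

/-- The modulus of compression of a map. -/
noncomputable def rhoMod {X Y : Type*} [PseudoMetricSpace X] [PseudoMetricSpace Y]
    (f : X → Y) (t : ℝ) : ℝ≥0∞ :=
  ⨅ p ∈ {p : X × X | t ≤ dist p.1 p.2}, edist (f p.1) (f p.2)

/-! Pull back a point-finite cover `𝒱` of `Y` with large Lebesgue number along `f`. Its members
`f ⁻¹' V` are bounded because `f` is not too compressing (`ρ_f → ∞`), and its Lebesgue number is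
at least `R` because `f` maps `R`-small sets to `ω_f(R)`-small ones, which some `V` contains as
soon as `ω_f(R) < Leb 𝒱`. -/

section Pullback

variable {X Y : Type*}

theorem IsCover.image_preimage {𝒱 : Set (Set Y)} (h𝒱 : IsCover 𝒱) (f : X → Y) :
    IsCover ((f ⁻¹' ·) '' 𝒱) := by
  refine eq_univ_of_forall fun x => ?_
  obtain ⟨V, hV, hfx⟩ : f x ∈ ⋃₀ 𝒱 := h𝒱 ▸ mem_univ _
  exact ⟨f ⁻¹' V, mem_image_of_mem _ hV, hfx⟩

theorem PointFinite.image_preimage {𝒱 : Set (Set Y)} (h𝒱 : PointFinite 𝒱) (f : X → Y) :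
    PointFinite ((f ⁻¹' ·) '' 𝒱) := by
  intro x
  refine ((h𝒱 (f x)).image (f ⁻¹' ·)).subset ?_
  rintro _ ⟨⟨V, hV, rfl⟩, hxV⟩
  exact ⟨V, ⟨hV, hxV⟩, rfl⟩

variable [PseudoMetricSpace X] [PseudoMetricSpace Y]

theorem exists_superset_of_ediam_lt_leb {U : Set (Set X)} {E : Set X}
    (hE : Metric.ediam E < Leb U) : ∃ V ∈ U, E ⊆ V := by
  obtain ⟨d, hd, hEd⟩ := lt_sSup_iff.mp hE
  exact hd E hEd

theorem ediam_le_covDiam {U : Set (Set X)} {V : Set X} (hV : V ∈ U) :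
    Metric.ediam V ≤ covDiam U :=
  le_iSup₂_of_le V hV le_rfl

theorem Δc_le_covDiam {U : Set (Set X)} {R : ℝ≥0∞} (hcov : IsCover U) (hpf : PointFinite U)
    (hR : R ≤ Leb U) : Δc X R ≤ covDiam U :=
  iInf₂_le U ⟨hcov, hpf, hR⟩

theorem ediam_image_le_omegaMod (f : X → Y) {E : Set X} {r : ℝ≥0}
    (hE : Metric.ediam E < r) : Metric.ediam (f '' E) ≤ omegaMod f r := by
  refine Metric.ediam_le ?_
  rintro _ ⟨x₁, hx₁, rfl⟩ _ ⟨x₂, hx₂, rfl⟩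
  have hdist : dist x₁ x₂ ≤ r :=
    (edist_lt_coe.mp ((Metric.edist_le_ediam_of_mem hx₁ hx₂).trans_lt hE)).le
  exact le_iSup₂_of_le (x₁, x₂) hdist le_rfl

theorem dist_lt_of_edist_lt_rhoMod (f : X → Y) {t : ℝ} {x₁ x₂ : X}
    (h : edist (f x₁) (f x₂) < rhoMod f t) : dist x₁ x₂ < t := by
  by_contra! hle
  have : rhoMod f t ≤ edist (f x₁) (f x₂) := iInf₂_le (x₁, x₂) hle
  exact this.not_gt h

theorem le_leb_image_preimage (f : X → Y) {𝒱 : Set (Set Y)} {r : ℝ≥0}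
    (h : omegaMod f r < Leb 𝒱) : (r : ℝ≥0∞) ≤ Leb ((f ⁻¹' ·) '' 𝒱) := by
  refine le_sSup fun E hE => ?_
  obtain ⟨V, hV, hfE⟩ :=
    exists_superset_of_ediam_lt_leb ((ediam_image_le_omegaMod f hE).trans_lt h)
  exact ⟨f ⁻¹' V, mem_image_of_mem _ hV, image_subset_iff.mp hfE⟩

theorem covDiam_image_preimage_le (f : X → Y) {𝒱 : Set (Set Y)} {t : ℝ}
    (h : covDiam 𝒱 < rhoMod f t) : covDiam ((f ⁻¹' ·) '' 𝒱) ≤ ENNReal.ofReal t := by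
  refine iSup₂_le ?_
  rintro _ ⟨V, hV, rfl⟩
  refine Metric.ediam_le fun x₁ hx₁ x₂ hx₂ => ?_
  have hfx : edist (f x₁) (f x₂) < rhoMod f t :=
    ((Metric.edist_le_ediam_of_mem (s := V) hx₁ hx₂).trans (ediam_le_covDiam hV)).trans_lt h
  rw [edist_dist]
  exact ENNReal.ofReal_le_ofReal (dist_lt_of_edist_lt_rhoMod f hfx).le

end Pullback

theorem stmt13 {X Y : Type*} [MetricSpace X] [MetricSpace Y]
    (hY : ∀ R : ℝ≥0, Δc Y R < ⊤) (f : X → Y)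
    (homega : ∀ t : ℝ, omegaMod f t < ⊤)
    (hrho : Tendsto (rhoMod f) atTop (nhds ⊤)) :
    ∀ R : ℝ≥0, Δc X R < ⊤ := by
  intro R
  obtain ⟨R', hR', -⟩ := ENNReal.lt_iff_exists_nnreal_btwn.mp (homega R)
  obtain ⟨𝒱, ⟨hcov, hpf, hleb⟩, hdiam⟩ : ∃ 𝒱 : Set (Set Y),
      (IsCover 𝒱 ∧ PointFinite 𝒱 ∧ (R' : ℝ≥0∞) ≤ Leb 𝒱) ∧ covDiam 𝒱 < ⊤ := by
    simpa only [Δc, iInf_lt_top, mem_ofPred_eq, exists_prop] using hY R'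
  obtain ⟨t, ht⟩ := (hrho.eventually (eventually_gt_nhds hdiam)).exists
  calc Δc X R ≤ covDiam ((f ⁻¹' ·) '' 𝒱) :=
        Δc_le_covDiam (hcov.image_preimage f) (hpf.image_preimage f)
          (le_leb_image_preimage f (hR'.trans_le hleb))
    _ ≤ ENNReal.ofReal t := covDiam_image_preimage_le f ht
    _ < ⊤ := ENNReal.ofReal_lt_top
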